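/- arXiv:1605.08163 — 2 statements merged into one kernel-verified Lean document; each statement's English description precedes it below -/
import Mathlib

section
/- Let δ_z(y) for finite sets z, y be defined as: 0 if |z| ≠ |y|, 1 if |z| = |y| = 0, and ∑_{σ ∈ S_n} ∏_{j=1}^n δ_{z_{σ(j)}}(y_j) if z = {z_1,...,z_n}, y = {y_1,...,y_n}, where δ_x is the Dirac delta at x. Then the multitarget Dirac delta satisfies the convolution identity: δ_{a ⊎ b}(y) = ∑_{w ⊆ y} δ_a(w) · δ_b(y \ w), where the sum is over all subsets w of the finite set y and ⊎ denotes disjoint union. -/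
theorem Finset.union_eq_iff_subset_and_eq_sdiff {α : Type*} [DecidableEq α] {a b y : Finset α}
    (hab : Disjoint a b) : a ∪ b = y ↔ a ⊆ y ∧ b = y \ a := by
  constructor
  · rintro rfl
    exact ⟨subset_union_left, (union_sdiff_cancel_left hab).symm⟩
  · rintro ⟨hay, rfl⟩
    exact union_sdiff_of_subset hay

/-- Discrete (Kronecker) multitarget delta convolution identity:
`δ_{a ⊎ b}(y) = ∑_{w ⊆ y} δ_a(w) · δ_b(y \ w)` for disjoint finite sets `a`, `b`. -/
theorem multitarget_delta_convolution {α : Type*} [DecidableEq α]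
    (a b y : Finset α) (hab : Disjoint a b) :
    (if a ∪ b = y then (1 : ℕ) else 0) =
      ∑ w ∈ y.powerset, (if a = w then (1 : ℕ) else 0) * (if b = y \ w then 1 else 0) := by
  -- only the term `w = a` survives, and it is present iff `a ⊆ y`
  simp only [ite_mul, one_mul, zero_mul, Finset.sum_ite_eq, Finset.mem_powerset,
    Finset.union_eq_iff_subset_and_eq_sdiff hab, ite_and]
end

section
/- Let w : Finset (L × ℕ) → ℝ≥0 be a weight function on finite sets of pairs (label, birth-time-etc.), and define the ordered weight ŵ(h_1,...,h_n) = ∑ over sequences l_{1:n} with (l_1,h_1), ..., (l_n,h_n) pairwise distinct of w({(l_1,h_1),...,(l_n,h_n)}). Then ŵ is permutation invariant: for any permutation σ of Fin n, ŵ(h_{σ(1)},...,h_{σ(n)}) = ŵ(h_1,...,h_n). -/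
/-- The ordered weight obtained by summing a set-valued weight over all label
sequences making the labelled hypotheses pairwise distinct is permutation
invariant. -/
theorem ordered_weight_perm_invariant {L H : Type*} [Fintype L] [DecidableEq L]
    [DecidableEq H] (w : Finset (L × H) → NNReal) (n : ℕ) (h : Fin n → H)
    (σ : Equiv.Perm (Fin n)) :
    (∑ l : Fin n → L,
        if Function.Injective (fun j => (l j, h (σ j))) then
          w (Finset.image (fun j => (l j, h (σ j))) Finset.univ) else 0) =
    ∑ l : Fin n → L,
        if Function.Injective (fun j => (l j, h j)) then
          w (Finset.image (fun j => (l j, h j)) Finset.univ) else 0 := by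
  apply Fintype.sum_bijective (fun l : Fin n → L => l ∘ σ.symm)
    ((Equiv.arrowCongr σ (Equiv.refl L)).bijective)
  intro l
  have hfun : (fun j => ((l ∘ σ.symm) j, h j)) =
      (fun j => (l j, h (σ j))) ∘ σ.symm := by
    funext j; simp
  have hinj : Function.Injective (fun j => ((l ∘ σ.symm) j, h j)) ↔
      Function.Injective (fun j => (l j, h (σ j))) := by
    rw [hfun]
    exact ⟨fun hi => (Function.Injective.of_comp_iff' _ σ.symm.bijective).mp hi,
      fun hi => hi.comp σ.symm.injective⟩
  have himg : Finset.image (fun j => ((l ∘ σ.symm) j, h j)) Finset.univ =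
      Finset.image (fun j => (l j, h (σ j))) Finset.univ := by
    rw [hfun, ← Finset.image_image]
    congr 1
    exact Finset.image_univ_equiv σ.symm
  simp only [hinj, himg]
end
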